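/- Let A, B, C be Banach algebras over 𝕂, let α : A → C and β : B → C be continuous surjective algebra homomorphisms such that: the extension determined by α is singular and admissible (α has a bounded linear right inverse) but α has no right inverse which is a continuous algebra homomorphism, while β has a right inverse which is a continuous algebra homomorphism. Let D, δ be the pullback data. Then the extension 0 → ker δ → D → B → 0 is singular and admissible, but δ has no right inverse which is a continuous algebra homomorphism. -/

import Mathlib

/- The pullback of two continuous algebra homomorphisms `α : A → C` and `β : B → C`
between (possibly non-unital) Banach algebras, realised as a closed subalgebra of the
Banach-algebra direct sum `A × B` (whose norm is the maximum of the coordinate norms). -/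

variable {𝕜 : Type*} [RCLike 𝕜]
variable {A B C : Type*}
  [NonUnitalNormedRing A] [NormedSpace 𝕜 A] [IsScalarTower 𝕜 A A] [SMulCommClass 𝕜 A A]
  [CompleteSpace A]
  [NonUnitalNormedRing B] [NormedSpace 𝕜 B] [IsScalarTower 𝕜 B B] [SMulCommClass 𝕜 B B]
  [CompleteSpace B]
  [NonUnitalNormedRing C] [NormedSpace 𝕜 C] [IsScalarTower 𝕜 C C] [SMulCommClass 𝕜 C C]
  [CompleteSpace C]

/-- The pullback `D = {(a,b) ∈ A ⊕ B : α(a) = β(b)}`. -/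
def pullback (α : A →ₙₐ[𝕜] C) (β : B →ₙₐ[𝕜] C) : NonUnitalSubalgebra 𝕜 (A × B) where
  carrier := {p | α p.1 = β p.2}
  add_mem' := by intro p q hp hq; simp only [Set.mem_setOf_eq] at *; simp [map_add, hp, hq]
  zero_mem' := by simp
  mul_mem' := by intro p q hp hq; simp only [Set.mem_setOf_eq] at *; simp [map_mul, hp, hq]
  smul_mem' := by intro c p hp; simp only [Set.mem_setOf_eq] at *; simp [map_smul, hp]

/-! A splitting of `δ` composed with a splitting of `β` and the first projection `D → A`
splits `α`, so `δ` cannot split strongly. Conversely a bounded linear section `σ` of `α`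
gives the bounded linear section `b ↦ (σ (β b), b)` of `δ`, and singularity passes to `D`
because `(a, 0) ∈ D` forces `α a = 0`. -/

namespace pullback

omit [IsScalarTower 𝕜 A A] [SMulCommClass 𝕜 A A] [CompleteSpace A] [IsScalarTower 𝕜 B B]
  [SMulCommClass 𝕜 B B] [CompleteSpace B] [IsScalarTower 𝕜 C C] [SMulCommClass 𝕜 C C]
  [CompleteSpace C]

variable (α : A →ₙₐ[𝕜] C) (β : B →ₙₐ[𝕜] C)

theorem map_fst_eq_map_snd (d : pullback α β) : α (d : A × B).1 = β (d : A × B).2 := d.2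

def fst : pullback α β →ₙₐ[𝕜] A :=
  (NonUnitalAlgHom.fst 𝕜 A B).comp (NonUnitalSubalgebraClass.subtype (pullback α β))

@[simp]
theorem fst_apply (d : pullback α β) : fst α β d = (d : A × B).1 := rfl

theorem continuous_fst : Continuous (fst α β) :=
  _root_.continuous_fst.comp continuous_subtype_val

theorem mul_eq_zero_of_snd_eq_zero (hαsing : ∀ a₁ a₂ : A, α a₁ = 0 → α a₂ = 0 → a₁ * a₂ = 0)
    {d₁ d₂ : pullback α β} (h₁ : (d₁ : A × B).2 = 0) (h₂ : (d₂ : A × B).2 = 0) :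
    d₁ * d₂ = 0 := by
  have hα₁ : α (d₁ : A × B).1 = 0 := by rw [map_fst_eq_map_snd, h₁, map_zero]
  have hα₂ : α (d₂ : A × B).1 = 0 := by rw [map_fst_eq_map_snd, h₂, map_zero]
  ext
  · exact hαsing _ _ hα₁ hα₂
  · exact (congrArg (· * (d₂ : A × B).2) h₁).trans (zero_mul _)

def liftSection (σ : C →L[𝕜] A) (hσ : ∀ c, α (σ c) = c) (hβ : Continuous β) :
    B →L[𝕜] pullback α β where
  toFun b := ⟨(σ (β b), b), hσ (β b)⟩
  map_add' x y := by ext <;> simp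
  map_smul' c x := by ext <;> simp
  cont := ((σ.continuous.comp hβ).prodMk continuous_id).subtype_mk _

@[simp]
theorem snd_liftSection (σ : C →L[𝕜] A) (hσ : ∀ c, α (σ c) = c) (hβ : Continuous β) (b : B) :
    (liftSection α β σ hσ hβ b : A × B).2 = b := rfl

theorem map_fst_comp_comp_eq_self (τ : B →ₙₐ[𝕜] pullback α β)
    (hτ : ∀ b, (τ b : A × B).2 = b) (ρ : C →ₙₐ[𝕜] B) (hρ : ∀ c, β (ρ c) = c) (c : C) :
    α ((fst α β).comp (τ.comp ρ) c) = c := by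
  rw [NonUnitalAlgHom.comp_apply, NonUnitalAlgHom.comp_apply, fst_apply, map_fst_eq_map_snd,
    hτ, hρ]

end pullback

theorem pullback_singular_admissible_not_strongly_split_general
    (α : A →ₙₐ[𝕜] C) (β : B →ₙₐ[𝕜] C)
    (hβ : Continuous β)
    (hαsing : ∀ a₁ a₂ : A, α a₁ = 0 → α a₂ = 0 → a₁ * a₂ = 0)
    (hαadm : ∃ σ : C →L[𝕜] A, ∀ c, α (σ c) = c)
    (hαnotstrong : ¬ ∃ σ : C →ₙₐ[𝕜] A, Continuous σ ∧ ∀ c, α (σ c) = c)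
    (hβsplit : ∃ ρ : C →ₙₐ[𝕜] B, Continuous ρ ∧ ∀ c, β (ρ c) = c) :
    (∀ d₁ d₂ : pullback α β, (d₁ : A × B).2 = 0 → (d₂ : A × B).2 = 0 → d₁ * d₂ = 0) ∧
    (∃ τ : B →L[𝕜] pullback α β, ∀ b, ((τ b : A × B)).2 = b) ∧
    ¬ (∃ τ : B →ₙₐ[𝕜] pullback α β, Continuous τ ∧ ∀ b, ((τ b : A × B)).2 = b) := by
  obtain ⟨σ, hσ⟩ := hαadm
  obtain ⟨ρ, hρc, hρ⟩ := hβsplit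
  refine ⟨fun _ _ => pullback.mul_eq_zero_of_snd_eq_zero α β hαsing,
    ⟨pullback.liftSection α β σ hσ hβ, pullback.snd_liftSection α β σ hσ hβ⟩, ?_⟩
  rintro ⟨τ, hτc, hτ⟩
  exact hαnotstrong ⟨(pullback.fst α β).comp (τ.comp ρ),
    (pullback.continuous_fst α β).comp (hτc.comp hρc),
    pullback.map_fst_comp_comp_eq_self α β τ hτ ρ hρ⟩

/-- Suppose that the extension determined by `α` is singular and admissible but does not
split strongly, while `β` has a right inverse which is a continuous algebra homomorphism.
Then the extension `0 → ker δ → D → B → 0` determined by the restricted coordinate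
projection `δ : D → B, (a,b) ↦ b` is singular and admissible, but `δ` has no right
inverse which is a continuous algebra homomorphism. -/
theorem pullback_singular_admissible_not_strongly_split
    (α : A →ₙₐ[𝕜] C) (β : B →ₙₐ[𝕜] C)
    (hα : Continuous α) (hβ : Continuous β)
    (hαsurj : Function.Surjective α) (hβsurj : Function.Surjective β)
    (hαsing : ∀ a₁ a₂ : A, α a₁ = 0 → α a₂ = 0 → a₁ * a₂ = 0)
    (hαadm : ∃ σ : C →L[𝕜] A, ∀ c, α (σ c) = c)
    (hαnotstrong : ¬ ∃ σ : C →ₙₐ[𝕜] A, Continuous σ ∧ ∀ c, α (σ c) = c)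
    (hβsplit : ∃ ρ : C →ₙₐ[𝕜] B, Continuous ρ ∧ ∀ c, β (ρ c) = c) :
    (∀ d₁ d₂ : pullback α β, (d₁ : A × B).2 = 0 → (d₂ : A × B).2 = 0 → d₁ * d₂ = 0) ∧
    (∃ τ : B →L[𝕜] pullback α β, ∀ b, ((τ b : A × B)).2 = b) ∧
    ¬ (∃ τ : B →ₙₐ[𝕜] pullback α β, Continuous τ ∧ ∀ b, ((τ b : A × B)).2 = b) :=
  pullback_singular_admissible_not_strongly_split_general α β hβ hαsing hαadm hαnotstrong hβsplit
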